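/- The generating polynomial D_n(q,t) = sum over Dyck paths p of order n of q^(area(p)) t^(rk(p)) admits the decomposition D_n(q,t) = sum over Motzkin paths m of order n of q^(area(m)) * t^(rk(m)) * (1+qt)^(n-1-2*rk(m)), for n ≥ 1. -/

import Mathlib

/-!
Cut a Dyck path of order `n` into its first step, its last step and the `n - 1` step pairs
`(2i+1, 2i+2)`. Reading `UU` and `DD` as up and down steps and the mixed pairs `DU`, `UD` as level
steps gives a Motzkin path `m` of order `n` and the set `c` of its level steps drawn as `UD`, and
every such pair `(m, c)` arises from exactly one Dyck path. Turning one level pair from `DU`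
into `UD` raises both `rk` and `area` by one, so the Dyck paths over `m` contribute
`q^area(m) t^rk(m) (1 + qt)^ℓ`, where `ℓ = n - 1 - 2 rk(m)` is the number of level steps of `m`.
-/

open Finset

/-- Number of up steps (`true`) among the first `k` steps of `p`. -/
def upCount {m : ℕ} (p : Fin m → Bool) (k : ℕ) : ℕ :=
  (Finset.univ.filter fun i : Fin m => (i : ℕ) < k ∧ p i = true).card

/-- Number of down steps (`false`) among the first `k` steps of `p`. -/
def downCount {m : ℕ} (p : Fin m → Bool) (k : ℕ) : ℕ :=
  (Finset.univ.filter fun i : Fin m => (i : ℕ) < k ∧ p i = false).card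

/-- `p` is a Dyck path of order `n`: a path of `2n` steps (up = `true`,
down = `false`), with `n` up steps, never going below the x-axis. -/
def IsDyck (n : ℕ) (p : Fin (2 * n) → Bool) : Prop :=
  upCount p (2 * n) = n ∧ ∀ k < 2 * n + 1, downCount p k ≤ upCount p k

instance (n : ℕ) : DecidablePred (IsDyck n) := fun p => by
  unfold IsDyck; infer_instance

/-- The Finset of Dyck paths of order `n`. -/
def dyckSet (n : ℕ) : Finset (Fin (2 * n) → Bool) :=
  Finset.univ.filter (IsDyck n)

/-- Height of the path after `k` steps. -/
def height {n : ℕ} (p : Fin (2 * n) → Bool) (k : ℕ) : ℕ :=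
  upCount p k - downCount p k

/-- The area of a Dyck path: the number of unused lattice points strictly below
the path and weakly above the x-axis (equivalently, the number of
`1/√2 × 1/√2` diamonds fitting between the path and the x-axis). -/
def area {n : ℕ} (p : Fin (2 * n) → Bool) : ℕ :=
  ∑ k ∈ Finset.range (2 * n + 1), height p k / 2

/-- The `j`-th step of `p` (defaulting to `false` out of range). -/
def stepAt {m : ℕ} (p : Fin m → Bool) (j : ℕ) : Bool :=
  if h : j < m then p ⟨j, h⟩ else false

/-- The rank of a Dyck path of order `n` in the noncrossing partition lattice
under Stump's bijection: equivalently (Simion–Ullman) the number of letters `b`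
and `r` in its SU-word, i.e. the number of `i ∈ {1,…,n-1}` for which the step
leaving the `i`-th odd lattice point (the step with index `2i-1`, 0-indexed)
is an up step. -/
def rk {n : ℕ} (p : Fin (2 * n) → Bool) : ℕ :=
  ((Finset.Icc 1 (n - 1)).filter fun i => stepAt p (2 * i - 1) = true).card

def upM {k : ℕ} (m : Fin k → Option Bool) (j : ℕ) : ℕ :=
  (Finset.univ.filter fun i : Fin k => (i : ℕ) < j ∧ m i = some true).card

def downM {k : ℕ} (m : Fin k → Option Bool) (j : ℕ) : ℕ :=
  (Finset.univ.filter fun i : Fin k => (i : ℕ) < j ∧ m i = some false).card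

/-- A Motzkin word (`some true` = up, `some false` = down, `none` = level):
as many ups as downs, every prefix having at least as many ups as downs.
A Motzkin path of order `n` is such a word of length `n-1`. -/
def IsMotzkin {k : ℕ} (m : Fin k → Option Bool) : Prop :=
  upM m k = downM m k ∧ ∀ j < k + 1, downM m j ≤ upM m j

instance (k : ℕ) : DecidablePred (IsMotzkin (k := k)) := fun m => by
  unfold IsMotzkin; infer_instance

/-- The Finset of Motzkin paths of order `n` (length `n-1`). -/
def motzSet (n : ℕ) : Finset (Fin (n - 1) → Option Bool) :=
  Finset.univ.filter IsMotzkin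

/-- The rank of a Motzkin path: its number of up steps. -/
def rkM {k : ℕ} (m : Fin k → Option Bool) : ℕ := upM m k

def mext {k : ℕ} (m : Fin k → Option Bool) (i : ℕ) : Option Bool :=
  if h : i < k then m ⟨i, h⟩ else none

/-- ρ : Motzkin paths of order `n` → Dyck paths of order `n`.  Prepend an up
step and append a down step; up steps become two up steps, down steps two down
steps, and each level step becomes a down-up pair. -/
def rho (n : ℕ) (m : Fin (n - 1) → Option Bool) : Fin (2 * n) → Bool := fun j =>
  if (j : ℕ) = 0 then true
  else if (j : ℕ) = 2 * n - 1 then false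
  else
    match mext m (((j : ℕ) - 1) / 2) with
    | some b => b
    | none => decide ((j : ℕ) % 2 = 0)

/-- The area of a Motzkin path is the area of the Dyck path `ρ(m)`. -/
def areaM (n : ℕ) (m : Fin (n - 1) → Option Bool) : ℕ := area (rho n m)

lemma card_filter_val_lt_eq_sum {M : ℕ} (g : ℕ → Prop) [DecidablePred g]
    (hg : ∀ j, g j → j < M) (k : ℕ) :
    #{i : Fin M | (i : ℕ) < k ∧ g i} = ∑ j ∈ range k, if g j then 1 else 0 := by
  rw [← card_filter]
  refine card_bij (fun i _ => (i : ℕ)) (fun i hi => ?_) (fun _ _ _ _ => Fin.ext)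
    (fun j hj => ?_)
  · simpa using hi
  · obtain ⟨hjk, hgj⟩ := mem_filter.1 hj
    exact ⟨⟨j, hg j hgj⟩, by simpa using ⟨mem_range.1 hjk, hgj⟩, rfl⟩

section Counting

variable {M : ℕ}

lemma stepAt_val (p : Fin M → Bool) (j : Fin M) : stepAt p j = p j := by
  simp [stepAt]

lemma eq_of_stepAt_eq {p p' : Fin M → Bool} (h : ∀ j < M, stepAt p j = stepAt p' j) :
    p = p' :=
  funext fun j => by simpa only [stepAt_val] using h j j.2

lemma upCount_eq_sum (p : Fin M → Bool) (k : ℕ) :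
    upCount p k = ∑ j ∈ range k, if stepAt p j = true then 1 else 0 := by
  have hlt : ∀ j, stepAt p j = true → j < M := fun j h => by
    by_contra hj
    simp [stepAt, hj] at h
  rw [upCount, ← card_filter_val_lt_eq_sum _ hlt]
  simp only [stepAt_val]

lemma downCount_eq_sum (p : Fin M → Bool) (k : ℕ) :
    downCount p k = ∑ j ∈ range k, if j < M ∧ stepAt p j = false then 1 else 0 := by
  rw [downCount, ← card_filter_val_lt_eq_sum _ fun j h => h.1]
  simp only [stepAt_val, Fin.is_lt, true_and]

@[simp] lemma upCount_zero (p : Fin M → Bool) : upCount p 0 = 0 := by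
  simp [upCount_eq_sum]

@[simp] lemma downCount_zero (p : Fin M → Bool) : downCount p 0 = 0 := by
  simp [downCount_eq_sum]

lemma upCount_succ (p : Fin M → Bool) (k : ℕ) :
    upCount p (k + 1) = upCount p k + if stepAt p k = true then 1 else 0 := by
  rw [upCount_eq_sum, upCount_eq_sum, sum_range_succ]

lemma downCount_succ (p : Fin M → Bool) {k : ℕ} (hk : k < M) :
    downCount p (k + 1) = downCount p k + if stepAt p k = false then 1 else 0 := by
  rw [downCount_eq_sum, downCount_eq_sum, sum_range_succ]
  simp [hk]

lemma upCount_add_downCount (p : Fin M → Bool) {k : ℕ} (hk : k ≤ M) :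
    upCount p k + downCount p k = k := by
  induction k with
  | zero => simp
  | succ k ih =>
    rw [upCount_succ, downCount_succ p hk]
    have := ih (by omega)
    cases stepAt p k <;> simp <;> omega

end Counting

section MotzkinCounting

variable {k : ℕ} (m : Fin k → Option Bool)

lemma mext_of_lt {i : ℕ} (hi : i < k) : mext m i = m ⟨i, hi⟩ := dif_pos hi

lemma countM_eq_sum (b : Bool) (j : ℕ) :
    #{i : Fin k | (i : ℕ) < j ∧ m i = some b} =
      ∑ i ∈ range j, if mext m i = some b then 1 else 0 := by
  have hlt : ∀ i, mext m i = some b → i < k := fun i h => by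
    by_contra hi
    simp [mext, hi] at h
  rw [← card_filter_val_lt_eq_sum _ hlt]
  simp only [mext_of_lt m (Fin.is_lt _), Fin.eta]

lemma upM_eq_sum (j : ℕ) : upM m j = ∑ i ∈ range j, if mext m i = some true then 1 else 0 :=
  countM_eq_sum m true j

lemma downM_eq_sum (j : ℕ) :
    downM m j = ∑ i ∈ range j, if mext m i = some false then 1 else 0 :=
  countM_eq_sum m false j

lemma upM_succ (j : ℕ) : upM m (j + 1) = upM m j + if mext m j = some true then 1 else 0 := by
  rw [upM_eq_sum, upM_eq_sum, sum_range_succ]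

lemma downM_succ (j : ℕ) :
    downM m (j + 1) = downM m j + if mext m j = some false then 1 else 0 := by
  rw [downM_eq_sum, downM_eq_sum, sum_range_succ]

def levelSteps : Finset ℕ := {i ∈ range k | mext m i = none}

lemma card_levelSteps {m : Fin k → Option Bool} (hm : IsMotzkin m) :
    #(levelSteps m) = k - 2 * rkM m := by
  have hsplit : #(levelSteps m) + upM m k + downM m k = k := by
    rw [levelSteps, card_filter, upM_eq_sum, downM_eq_sum, ← sum_add_distrib,
      ← sum_add_distrib]
    conv_rhs => rw [← card_range k, card_eq_sum_ones]
    refine sum_congr rfl fun i _ => ?_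
    rcases mext m i with _ | _ | _ <;> simp
  have := hm.1
  rw [rkM]
  omega

end MotzkinCounting

section Dyck

variable {n : ℕ} {p : Fin (2 * n) → Bool}

/-- Heights at odd positions are odd. -/
lemma isDyck_iff : IsDyck n p ↔
    upCount p (2 * n) = n ∧ ∀ i < n, downCount p (2 * i + 1) < upCount p (2 * i + 1) := by
  refine and_congr_right fun _ => ⟨fun h i hi => ?_, fun h k hk => ?_⟩
  · have := h (2 * i + 1) (by omega)
    have := upCount_add_downCount p (k := 2 * i + 1) (by omega)
    omega
  · obtain rfl | hk0 := Nat.eq_zero_or_pos k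
    · simp
    obtain ⟨i, rfl | rfl⟩ : ∃ i, k = 2 * i + 1 ∨ k = 2 * i + 2 :=
      ⟨(k - 1) / 2, by omega⟩
    · exact (h i (by omega)).le
    · have := h i (by omega)
      rw [upCount_succ, downCount_succ p (by omega)]
      cases stepAt p (2 * i + 1) <;> simp <;> omega

lemma IsDyck.stepAt_zero (hp : IsDyck n p) (hn : 1 ≤ n) : stepAt p 0 = true := by
  have h := (isDyck_iff.1 hp).2 0 hn
  rw [upCount_succ, downCount_succ p (by omega)] at h
  cases hs : stepAt p 0 <;> simp [hs] at h ⊢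

lemma IsDyck.stepAt_last (hp : IsDyck n p) (hn : 1 ≤ n) : stepAt p (2 * n - 1) = false := by
  have hup := hp.1
  have hprev := hp.2 (2 * n - 1) (by omega)
  have htot := upCount_add_downCount p (k := 2 * n - 1) (by omega)
  have hlast := upCount_succ p (2 * n - 1)
  rw [Nat.sub_add_cancel (by omega)] at hlast
  cases hs : stepAt p (2 * n - 1) <;> simp [hs] at hlast ⊢
  omega

lemma rk_eq_sum (p : Fin (2 * n) → Bool) :
    rk p = ∑ i ∈ range (n - 1), if stepAt p (2 * i + 1) = true then 1 else 0 := by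
  rw [rk, card_filter, show Icc 1 (n - 1) = Ico 1 n by ext; simp; omega,
    sum_Ico_eq_sum_range]
  exact sum_congr rfl fun i _ => by rw [show 2 * (1 + i) - 1 = 2 * i + 1 by omega]

lemma sum_range_two_mul_add_one {β : Type*} [AddCommMonoid β] (f : ℕ → β) (n : ℕ) :
    ∑ k ∈ range (2 * n + 1), f k =
      f 0 + ∑ i ∈ range n, (f (2 * i + 1) + f (2 * i + 2)) := by
  induction n with
  | zero => simp
  | succ n ih =>
    rw [show 2 * (n + 1) + 1 = 2 * n + 1 + 1 + 1 by ring, sum_range_succ, sum_range_succ, ih,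
      sum_range_succ, add_assoc, add_assoc]

lemma IsDyck.height_div_two_add (hp : IsDyck n p) {i : ℕ} (hi : i < n) :
    height p (2 * i + 1) / 2 + height p (2 * i + 2) / 2 + 1 =
      height p (2 * i + 1) + if stepAt p (2 * i + 1) = true then 1 else 0 := by
  have hpos := (isDyck_iff.1 hp).2 i hi
  have htot := upCount_add_downCount p (k := 2 * i + 1) (by omega)
  rw [height, height, upCount_succ p (2 * i + 1), downCount_succ p (k := 2 * i + 1) (by omega)]
  cases stepAt p (2 * i + 1) <;> simp <;> omega

lemma IsDyck.area_add (hp : IsDyck n p) (hn : 1 ≤ n) :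
    area p + n = rk p + ∑ i ∈ range n, height p (2 * i + 1) := by
  have hpeaks : ∑ i ∈ range n, (if stepAt p (2 * i + 1) = true then 1 else 0) = rk p := by
    rw [rk_eq_sum, show range n = range (n - 1 + 1) by rw [Nat.sub_add_cancel hn],
      sum_range_succ, show 2 * (n - 1) + 1 = 2 * n - 1 by omega, hp.stepAt_last hn]
    simp
  calc area p + n
      = ∑ i ∈ range n, (height p (2 * i + 1) / 2 + height p (2 * i + 2) / 2 + 1) := by
        rw [sum_add_distrib, sum_const, card_range, smul_eq_mul, mul_one, area,
          sum_range_two_mul_add_one, height, upCount_zero, downCount_zero, Nat.zero_div, zero_add]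
    _ = ∑ i ∈ range n, (height p (2 * i + 1) + if stepAt p (2 * i + 1) = true then 1 else 0) :=
        sum_congr rfl fun i hi => hp.height_div_two_add (mem_range.1 hi)
    _ = rk p + ∑ i ∈ range n, height p (2 * i + 1) := by rw [sum_add_distrib, hpeaks, add_comm]

end Dyck

/-- `ρ(m)`, except that the level steps of `m` at the positions in `c` become up-down pairs
instead of down-up pairs. -/
def rhoFlip (n : ℕ) (m : Fin (n - 1) → Option Bool) (c : Finset ℕ) : Fin (2 * n) → Bool :=
  fun j =>
    if (j : ℕ) = 0 then true
    else if (j : ℕ) = 2 * n - 1 then false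
    else
      (mext m (((j : ℕ) - 1) / 2)).getD
        (decide ((((j : ℕ) - 1) / 2 ∈ c) ↔ (j : ℕ) % 2 = 1))

section RhoFlip

variable {n : ℕ} (m : Fin (n - 1) → Option Bool) (c : Finset ℕ)

lemma rho_eq_rhoFlip_empty : rho n m = rhoFlip n m ∅ := by
  funext j
  simp only [rho, rhoFlip, notMem_empty, false_iff]
  split_ifs
  · rfl
  · rfl
  · cases mext m (((j : ℕ) - 1) / 2) <;> simp

lemma stepAt_rhoFlip_zero (hn : 1 ≤ n) : stepAt (rhoFlip n m c) 0 = true := by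
  simp [stepAt, rhoFlip, show 0 < n by omega]

lemma stepAt_rhoFlip_last (hn : 1 ≤ n) : stepAt (rhoFlip n m c) (2 * n - 1) = false := by
  simp [stepAt, rhoFlip]
  omega

lemma stepAt_rhoFlip_odd {i : ℕ} (hi : i < n - 1) :
    stepAt (rhoFlip n m c) (2 * i + 1) = (mext m i).getD (decide (i ∈ c)) := by
  simp [stepAt, rhoFlip, show 2 * i + 1 < 2 * n by omega, show 2 * i + 1 ≠ 2 * n - 1 by omega,
    Nat.add_mod]

lemma stepAt_rhoFlip_even {i : ℕ} (hi : i < n - 1) :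
    stepAt (rhoFlip n m c) (2 * i + 2) = (mext m i).getD (decide (i ∉ c)) := by
  simp [stepAt, rhoFlip, show 2 * i + 2 < 2 * n by omega, show 2 * i + 2 ≠ 2 * n - 1 by omega,
    show (2 * i + 1) / 2 = i by omega]

lemma upCount_rhoFlip (hn : 1 ≤ n) {i : ℕ} (hi : i < n) :
    upCount (rhoFlip n m c) (2 * i + 1) + downM m i = upM m i + i + 1 := by
  induction i with
  | zero => simp [upCount_succ, stepAt_rhoFlip_zero m c hn, upM_eq_sum, downM_eq_sum]
  | succ i ih =>
    have := ih (by omega)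
    rw [show 2 * (i + 1) + 1 = 2 * i + 1 + 1 + 1 by ring, upCount_succ, upCount_succ,
      stepAt_rhoFlip_odd m c (by omega), show 2 * i + 1 + 1 = 2 * i + 2 by ring,
      stepAt_rhoFlip_even m c (by omega), upM_succ, downM_succ]
    rcases mext m i with _ | _ | _ <;> [by_cases i ∈ c; skip; skip] <;> simp_all <;> omega

lemma downCount_rhoFlip (hn : 1 ≤ n) {i : ℕ} (hi : i < n) :
    downCount (rhoFlip n m c) (2 * i + 1) + upM m i = downM m i + i := by
  induction i with
  | zero =>
    simp [downCount_succ _ (show 0 < 2 * n by omega), stepAt_rhoFlip_zero m c hn, upM_eq_sum,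
      downM_eq_sum]
  | succ i ih =>
    have := ih (by omega)
    rw [show 2 * (i + 1) + 1 = 2 * i + 1 + 1 + 1 by ring, downCount_succ _ (by omega),
      downCount_succ _ (by omega), stepAt_rhoFlip_odd m c (by omega),
      show 2 * i + 1 + 1 = 2 * i + 2 by ring, stepAt_rhoFlip_even m c (by omega), upM_succ,
      downM_succ]
    rcases mext m i with _ | _ | _ <;> [by_cases i ∈ c; skip; skip] <;> simp_all <;> omega

variable {m c}

lemma isDyck_rhoFlip_iff (hn : 1 ≤ n) : IsDyck n (rhoFlip n m c) ↔ IsMotzkin m := by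
  have hup := upCount_rhoFlip m c hn (i := n - 1) (by omega)
  have hdown := downCount_rhoFlip m c hn (i := n - 1) (by omega)
  have hlast := upCount_succ (rhoFlip n m c) (2 * (n - 1) + 1)
  rw [show 2 * (n - 1) + 1 + 1 = 2 * n by omega] at hlast
  rw [show 2 * (n - 1) + 1 = 2 * n - 1 by omega] at hlast hup hdown
  rw [stepAt_rhoFlip_last m c hn, if_neg Bool.false_ne_true, add_zero] at hlast
  rw [isDyck_iff, IsMotzkin, show n - 1 + 1 = n by omega, hlast]
  refine and_congr (by omega) (forall₂_congr fun i hi => ?_)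
  have := upCount_rhoFlip m c hn hi
  have := downCount_rhoFlip m c hn hi
  omega

lemma rk_rhoFlip (hc : c ⊆ levelSteps m) : rk (rhoFlip n m c) = rkM m + #c := by
  have hstep : ∀ i ∈ range (n - 1),
      (if stepAt (rhoFlip n m c) (2 * i + 1) = true then 1 else 0) =
        (if mext m i = some true then 1 else 0) + if i ∈ c then 1 else 0 := fun i hi => by
    rw [stepAt_rhoFlip_odd m c (mem_range.1 hi)]
    rcases h : mext m i with _ | _ | _
    · simp
    all_goals
      have : i ∉ c := fun hic => by simpa [levelSteps, h] using hc hic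
      simp [this]
  rw [rk_eq_sum, sum_congr rfl hstep, sum_add_distrib, rkM, upM_eq_sum]
  congr 1
  rw [sum_boole, Nat.cast_id, filter_mem_eq_inter,
    inter_eq_right.2 (hc.trans (filter_subset _ _))]

/-- The heights at odd positions, hence `area - rk`, do not depend on the flipped steps. -/
lemma area_rhoFlip (hn : 1 ≤ n) (hm : IsMotzkin m) (hc : c ⊆ levelSteps m) :
    area (rhoFlip n m c) = areaM n m + #c := by
  have hodd : ∀ i ∈ range n,
      height (rhoFlip n m c) (2 * i + 1) = height (rhoFlip n m ∅) (2 * i + 1) := fun i hi => by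
    have := upCount_rhoFlip m c hn (mem_range.1 hi)
    have := downCount_rhoFlip m c hn (mem_range.1 hi)
    have := upCount_rhoFlip m ∅ hn (mem_range.1 hi)
    have := downCount_rhoFlip m ∅ hn (mem_range.1 hi)
    rw [height, height]
    omega
  have hc' := ((isDyck_rhoFlip_iff (c := c) hn).2 hm).area_add hn
  have he := ((isDyck_rhoFlip_iff (c := ∅) hn).2 hm).area_add hn
  rw [sum_congr rfl hodd, rk_rhoFlip hc] at hc'
  rw [rk_rhoFlip (empty_subset _), card_empty, add_zero] at he
  rw [areaM, rho_eq_rhoFlip_empty]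
  omega

end RhoFlip

def motzkinOf (n : ℕ) (p : Fin (2 * n) → Bool) : Fin (n - 1) → Option Bool := fun i =>
  if stepAt p (2 * i + 1) = stepAt p (2 * i + 2) then some (stepAt p (2 * i + 1)) else none

def peaksOf (n : ℕ) (p : Fin (2 * n) → Bool) : Finset ℕ :=
  {i ∈ range (n - 1) | stepAt p (2 * i + 1) = true ∧ stepAt p (2 * i + 2) = false}

section Inverse

variable {n : ℕ}

lemma motzkinOf_rhoFlip (m : Fin (n - 1) → Option Bool) (c : Finset ℕ) :
    motzkinOf n (rhoFlip n m c) = m := by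
  funext i
  rw [motzkinOf, stepAt_rhoFlip_odd m c i.2, stepAt_rhoFlip_even m c i.2, mext_of_lt m i.2]
  rcases m i with _ | _ | _ <;> [by_cases (i : ℕ) ∈ c; skip; skip] <;> simp_all

lemma peaksOf_rhoFlip {m : Fin (n - 1) → Option Bool} {c : Finset ℕ} (hc : c ⊆ levelSteps m) :
    peaksOf n (rhoFlip n m c) = c := by
  ext i
  simp only [peaksOf, mem_filter, mem_range]
  by_cases hi : i < n - 1
  · rw [stepAt_rhoFlip_odd m c hi, stepAt_rhoFlip_even m c hi]
    rcases h : mext m i with _ | _ | _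
    · by_cases i ∈ c <;> simp_all
    all_goals
      have : i ∉ c := fun hic => by simpa [levelSteps, h] using hc hic
      simp [this]
  · have : i ∉ c := fun hic => hi (mem_range.1 (mem_filter.1 (hc hic)).1)
    simp [hi, this]

lemma peaksOf_subset_levelSteps (p : Fin (2 * n) → Bool) :
    peaksOf n p ⊆ levelSteps (motzkinOf n p) := fun i hi => by
  obtain ⟨hi, hup, hdown⟩ := mem_filter.1 hi
  simp [levelSteps, mext_of_lt _ (mem_range.1 hi), motzkinOf, hup, hdown, mem_range.1 hi]

lemma rhoFlip_motzkinOf_peaksOf (hn : 1 ≤ n) {p : Fin (2 * n) → Bool} (h0 : stepAt p 0 = true)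
    (hlast : stepAt p (2 * n - 1) = false) :
    rhoFlip n (motzkinOf n p) (peaksOf n p) = p := by
  refine eq_of_stepAt_eq fun j hj => ?_
  obtain rfl | rfl | ⟨i, hi, rfl | rfl⟩ :
      j = 0 ∨ j = 2 * n - 1 ∨ ∃ i < n - 1, j = 2 * i + 1 ∨ j = 2 * i + 2 :=
    if h : j = 0 ∨ j = 2 * n - 1 then h.imp_right Or.inl
    else Or.inr (Or.inr ⟨(j - 1) / 2, by omega, by omega⟩)
  · rw [stepAt_rhoFlip_zero _ _ hn, h0]
  · rw [stepAt_rhoFlip_last _ _ hn, hlast]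
  all_goals
    simp only [stepAt_rhoFlip_odd _ _ hi, stepAt_rhoFlip_even _ _ hi, mext_of_lt _ hi, motzkinOf,
      peaksOf, mem_filter, mem_range, hi, true_and]
    cases stepAt p (2 * i + 1) <;> cases stepAt p (2 * i + 2) <;> simp

end Inverse

lemma sum_dyckSet_eq_sum_sigma {n : ℕ} (hn : 1 ≤ n) {R : Type*} [AddCommMonoid R]
    (f : (Fin (2 * n) → Bool) → R) :
    ∑ p ∈ dyckSet n, f p =
      ∑ x ∈ (motzSet n).sigma fun m => (levelSteps m).powerset, f (rhoFlip n x.1 x.2) := by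
  have hdyck : ∀ {p}, p ∈ dyckSet n → rhoFlip n (motzkinOf n p) (peaksOf n p) = p := fun hp =>
    have hp : IsDyck n _ := (mem_filter.1 hp).2
    rhoFlip_motzkinOf_peaksOf hn (hp.stepAt_zero hn) (hp.stepAt_last hn)
  refine sum_nbij' (fun p => ⟨motzkinOf n p, peaksOf n p⟩) (fun x => rhoFlip n x.1 x.2)
    (fun p hp => ?_) (fun x hx => ?_) (fun p hp => hdyck hp) (fun x hx => ?_)
    (fun p hp => by rw [hdyck hp])
  · have hdyck' : IsDyck n (rhoFlip n (motzkinOf n p) (peaksOf n p)) :=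
      (hdyck hp).symm ▸ (mem_filter.1 hp).2
    simp only [mem_sigma, mem_powerset]
    exact ⟨mem_filter.2 ⟨mem_univ _, (isDyck_rhoFlip_iff hn).1 hdyck'⟩,
      peaksOf_subset_levelSteps p⟩
  · simp only [mem_sigma] at hx
    exact mem_filter.2 ⟨mem_univ _, (isDyck_rhoFlip_iff hn).2 (mem_filter.1 hx.1).2⟩
  · simp only [mem_sigma, mem_powerset] at hx
    rw [motzkinOf_rhoFlip, peaksOf_rhoFlip hx.2]

/-- Refined γ-nonnegativity: for `n ≥ 1`,
`D_n(q,t) = ∑_{m ∈ M(n)} q^area(m) t^rk(m) (1+qt)^(n-1-2 rk(m))`,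
the sum being over Motzkin paths of order `n`. -/
theorem refined_gamma_nonnegativity (n : ℕ) (hn : 1 ≤ n) (q t : ℝ) :
    (∑ p ∈ dyckSet n, q ^ area p * t ^ rk p) =
      ∑ m ∈ motzSet n,
        q ^ areaM n m * t ^ rkM m * (1 + q * t) ^ (n - 1 - 2 * rkM m) := by
  rw [sum_dyckSet_eq_sum_sigma hn, sum_sigma]
  refine sum_congr rfl fun m hm => ?_
  have hmotz : IsMotzkin m := (mem_filter.1 hm).2
  calc ∑ c ∈ (levelSteps m).powerset, q ^ area (rhoFlip n m c) * t ^ rk (rhoFlip n m c)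
      = ∑ c ∈ (levelSteps m).powerset, q ^ areaM n m * t ^ rkM m *
          ((q * t) ^ #c * 1 ^ (#(levelSteps m) - #c)) :=
        sum_congr rfl fun c hc => by
          rw [area_rhoFlip hn hmotz (mem_powerset.1 hc), rk_rhoFlip (mem_powerset.1 hc)]
          ring
    _ = q ^ areaM n m * t ^ rkM m * (1 + q * t) ^ (n - 1 - 2 * rkM m) := by
        rw [← mul_sum, sum_pow_mul_eq_add_pow, card_levelSteps hmotz, add_comm]
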